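/- Let n > 0, λ ∈ ℝ, y₀ ∈ ℝ, set γ := 10/n and μ := γ(n + 1) = 10(n + 1)/n, and define on infinitely differentiable ψ : ℝ → ℝ the operators P_k by P_0[ψ] = ψ and P_{k+1}[ψ] = (P_k[ψ])' + (μ − k)·P_k[ψ]. Let φ : ℝ → ℝ be infinitely differentiable with φ > 0, and suppose the oscillatory-component equation P_{10}[φ^{n+1}](s) = λ·φ(s) holds for all s ∈ ℝ. Then the function f(y) := (y₀ − y)^γ · φ(ln(y₀ − y)), defined for y < y₀, satisfies the near-interface asymptotic ODE λ·f(y) = (f^{n+1})^{(10)}(y) for all y < y₀, where (f^{n+1})^{(10)} is the 10-th derivative of y ↦ f(y)^{n+1} on (−∞, y₀). -/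

import Mathlib

theorem stmt_17 (n lam y₀ : ℝ) (hn : 0 < n) (γ μ : ℝ)
    (hγ : γ = 10 / n) (hμ : μ = γ * (n + 1))
    (φ : ℝ → ℝ) (hφ : ContDiff ℝ (⊤ : ℕ∞) φ) (hφpos : ∀ s : ℝ, 0 < φ s)
    (Q : ℕ → ℝ → ℝ) (hQ0 : Q 0 = fun s => φ s ^ (n + 1))
    (hQs : ∀ k : ℕ, Q (k + 1) = fun s => deriv (Q k) s + (μ - (k : ℝ)) * Q k s)
    (hosc : ∀ s : ℝ, Q 10 s = lam * φ s)
    (f : ℝ → ℝ)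
    (hf : ∀ y < y₀, f y = (y₀ - y) ^ γ * φ (Real.log (y₀ - y))) :
    ∀ y < y₀,
      lam * f y
        = iteratedDerivWithin 10 (fun z => f z ^ (n + 1)) (Set.Iio y₀) y := by
  -- smoothness of Q k
  have hQsm : ∀ k, ContDiff ℝ (⊤ : ℕ∞) (Q k) := by
    intro k
    induction k with
    | zero =>
      rw [hQ0]
      rw [contDiff_iff_contDiffAt]
      intro s
      exact (hφ.contDiffAt).rpow_const_of_ne (ne_of_gt (hφpos s))
    | succ k ih =>
      rw [hQs k]
      have hd : ContDiff ℝ (⊤ : ℕ∞) (deriv (Q k)) :=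
        (contDiff_succ_iff_deriv.mp (show ContDiff ℝ (((⊤ : ℕ∞) : WithTop ℕ∞) + 1) (Q k) from ih.of_le (by rw [← WithTop.coe_one, ← WithTop.coe_add, top_add]))).2.2
      exact hd.add (contDiff_const.mul ih)
  have key : ∀ k : ℕ, ∀ y < y₀,
      iteratedDerivWithin k (fun z => f z ^ (n + 1)) (Set.Iio y₀) y
        = (-1 : ℝ) ^ k * ((y₀ - y) ^ (μ - k) * Q k (Real.log (y₀ - y))) := by
    intro k
    induction k with
    | zero =>
      intro y hy
      have ht : (0:ℝ) < y₀ - y := by linarith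
      simp only [iteratedDerivWithin_zero, pow_zero, Nat.cast_zero, sub_zero, one_mul, hQ0]
      rw [hf y hy, Real.mul_rpow (Real.rpow_nonneg ht.le γ) (hφpos _).le,
        ← Real.rpow_mul ht.le, hμ]
    | succ k ih =>
      intro y hy
      have ht : (0:ℝ) < y₀ - y := by linarith
      have hne : y₀ - y ≠ 0 := ne_of_gt ht
      rw [iteratedDerivWithin_succ,
        derivWithin_of_isOpen isOpen_Iio hy]
      have hev : iteratedDerivWithin k (fun z => f z ^ (n + 1)) (Set.Iio y₀)
          =ᶠ[nhds y] (fun y => (-1 : ℝ) ^ k * ((y₀ - y) ^ (μ - k) * Q k (Real.log (y₀ - y)))) := by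
        filter_upwards [isOpen_Iio.mem_nhds hy] with z hz
        exact ih z hz
      rw [hev.deriv_eq]
      -- compute the derivative of the explicit function
      have hsub : HasDerivAt (fun y : ℝ => y₀ - y) (-1) y := by
        simpa using (hasDerivAt_id y).const_sub y₀
      have h1 : HasDerivAt (fun y : ℝ => (y₀ - y) ^ (μ - k))
          (((μ - k) * (y₀ - y) ^ (μ - k - 1)) * (-1)) y :=
        (Real.hasDerivAt_rpow_const (Or.inl hne)).comp y hsub
      have h2 : HasDerivAt (fun y : ℝ => Q k (Real.log (y₀ - y)))
          (deriv (Q k) (Real.log (y₀ - y)) * ((y₀ - y)⁻¹ * (-1))) y := by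
        have hlog : HasDerivAt (fun y : ℝ => Real.log (y₀ - y)) ((y₀ - y)⁻¹ * (-1)) y :=
          (Real.hasDerivAt_log hne).comp y hsub
        exact (((hQsm k).differentiable (by simp)).differentiableAt.hasDerivAt).comp y hlog
      have h3 : deriv (fun y => (-1 : ℝ) ^ k * ((y₀ - y) ^ (μ - k) * Q k (Real.log (y₀ - y)))) y = (-1 : ℝ) ^ k * ((μ - k) * (y₀ - y) ^ (μ - k - 1) * -1 * Q k (Real.log (y₀ - y)) + (y₀ - y) ^ (μ - k) * (deriv (Q k) (Real.log (y₀ - y)) * ((y₀ - y)⁻¹ * -1))) := ((h1.mul h2).const_mul ((-1 : ℝ) ^ k)).deriv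
      rw [h3]
      rw [hQs k]
      have e1 : (y₀ - y) ^ (μ - k - 1) = (y₀ - y) ^ (μ - k) / (y₀ - y) := by
        rw [show μ - k - 1 = (μ - k) - 1 by ring, Real.rpow_sub ht, Real.rpow_one]
      have e2 : (y₀ - y) ^ (μ - ((k : ℝ) + 1)) = (y₀ - y) ^ (μ - k) / (y₀ - y) := by
        rw [show μ - ((k:ℝ) + 1) = (μ - k) - 1 by ring, Real.rpow_sub ht, Real.rpow_one]
      push_cast
      rw [e1, e2]
      field_simp
      ring
  intro y hy
  have ht : (0:ℝ) < y₀ - y := by linarith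
  rw [key 10 y hy, hosc, hf y hy]
  have : μ - (10 : ℕ) = γ := by
    have : γ * n = 10 := by rw [hγ]; field_simp
    push_cast
    nlinarith [this]
  rw [this]
  norm_num
  ring
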